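/- arXiv:1307.5836 — 7 statements merged into one kernel-verified Lean document; each statement's English description precedes it below -/
import Mathlib

section
/- Let X be a locally compact Hausdorff space. If X has a sequence of compact subsets whose union is dense in X, then there exists a positive function g ∈ C₀(X) (continuous functions vanishing at infinity) that is not a zero divisor in C₀(X), i.e., for all h ∈ C₀(X), g * h = 0 implies h = 0. -/
/-!
Urysohn's lemma gives nonnegative compactly supported functions `u n` equal to `1` on `K n`.
Since `C₀(X)` is complete, the series `∑ 2⁻ⁿ u n / (1 + ‖u n‖)` converges there to a nonnegative
`g` that is nonzero on the dense set `⋃ n, K n`; if `g * h = 0`, then `h` vanishes on this set,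
hence everywhere by continuity.
-/

open scoped ZeroAtInfty ComplexOrder BoundedContinuousFunction
open Function Set

namespace ZeroAtInftyContinuousMap

variable {X β : Type*} [TopologicalSpace X]

instance [NormedAddCommGroup β] : ContinuousEvalConst C₀(X, β) X β where
  continuous_eval_const x :=
    (continuous_eval_const (F := X →ᵇ β) x).comp isometry_toBCF.continuous

theorem hasSum_apply {ι : Type*} [NormedAddCommGroup β] {f : ι → C₀(X, β)} {g : C₀(X, β)}
    (hf : HasSum f g) (x : X) : HasSum (fun i => f i x) (g x) :=
  hf.map (AddMonoidHom.mk' (fun f : C₀(X, β) => f x) fun _ _ => rfl) (continuous_eval_const x)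

theorem exists_nonneg_support_eq_iUnion [NormedAddCommGroup β] [NormedSpace ℝ β]
    [CompleteSpace β] [PartialOrder β] [IsOrderedAddMonoid β] [OrderClosedTopology β]
    [PosSMulMono ℝ β]
    (f : ℕ → C₀(X, β)) (hf : ∀ n x, 0 ≤ f n x) :
    ∃ g : C₀(X, β), (∀ x, 0 ≤ g x) ∧ support g = ⋃ n, support (f n) := by
  set c : ℕ → ℝ := fun n => (1 / 2) ^ n / (1 + ‖f n‖)
  have hc : ∀ n, 0 < c n := fun n => by positivity
  have hnorm : ∀ n, ‖c n • f n‖ ≤ (1 / 2) ^ n := fun n => by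
    rw [norm_smul, Real.norm_of_nonneg (hc n).le, div_mul_eq_mul_div, div_le_iff₀ (by positivity)]
    gcongr
    linarith
  obtain ⟨g, hg⟩ := Summable.of_norm_bounded summable_geometric_two hnorm
  have hterm_nonneg : ∀ x n, 0 ≤ c n • f n x := fun x n => smul_nonneg (hc n).le (hf n x)
  refine ⟨g, fun x => (hasSum_apply hg x).nonneg (hterm_nonneg x), ?_⟩
  ext x
  have hzero : g x = 0 ↔ ∀ n, f n x = 0 :=
    calc g x = 0 ↔ HasSum (fun n => c n • f n x) 0 :=
          ⟨fun h => h ▸ hasSum_apply hg x, (hasSum_apply hg x).unique⟩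
      _ ↔ ∀ n, f n x = 0 := by
          simp [hasSum_zero_iff_of_nonneg (hterm_nonneg x), funext_iff, (hc _).ne']
  simp only [mem_support, mem_iUnion, ne_eq, hzero, not_forall]

theorem eq_zero_of_dense_support_of_mul_eq_zero [TopologicalSpace β] [T2Space β] [MulZeroClass β]
    [NoZeroDivisors β] [ContinuousMul β] {g h : C₀(X, β)} (hg : Dense (support g))
    (hgh : g * h = 0) : h = 0 := by
  have hvanish : EqOn h 0 (support g) := fun x hx =>
    (mul_eq_zero.mp (congr($hgh x) : g x * h x = 0)).resolve_left hx
  exact DFunLike.coe_injective (Continuous.ext_on hg (map_continuous h) continuous_const hvanish)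

theorem exists_nonneg_eqOn_one_of_isCompact [RegularSpace X] [LocallyCompactSpace X] {K : Set X}
    (hK : IsCompact K) : ∃ u : C₀(X, ℂ), (∀ x, 0 ≤ u x) ∧ EqOn u 1 K := by
  obtain ⟨f, hf_one, -, hf_supp, hf_mem⟩ :=
    exists_continuous_one_zero_of_isCompact hK isClosed_empty (disjoint_empty K)
  refine ⟨⟨⟨fun x => (f x : ℂ), by fun_prop⟩,
      (hf_supp.comp_left Complex.ofReal_zero).is_zero_at_infty⟩,
    fun x => Complex.zero_le_real.mpr (hf_mem x).1, fun x hx => ?_⟩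
  simp [hf_one hx]

end ZeroAtInftyContinuousMap

open ZeroAtInftyContinuousMap

/-- If a locally compact Hausdorff space has a sequence of compact subsets with dense
union, then `C₀(X)` has a positive element that is not a zero divisor. -/
theorem stmt_2 {X : Type*} [TopologicalSpace X] [LocallyCompactSpace X] [T2Space X]
    (K : ℕ → Set X) (hK : ∀ n, IsCompact (K n)) (hdense : Dense (⋃ n, K n)) :
    ∃ g : C₀(X, ℂ), (∀ x, 0 ≤ g x) ∧ ∀ h : C₀(X, ℂ), g * h = 0 → h = 0 := by
  choose u hu_nonneg hu_one using fun n => exists_nonneg_eqOn_one_of_isCompact (hK n)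
  obtain ⟨g, hg_nonneg, hg_support⟩ := exists_nonneg_support_eq_iUnion u hu_nonneg
  have hK_support : ⋃ n, K n ⊆ support g := by
    rw [hg_support]
    exact iUnion_mono fun n x hx => by simp [hu_one n hx]
  exact ⟨g, hg_nonneg, fun h => eq_zero_of_dense_support_of_mul_eq_zero (hdense.mono hK_support)⟩
end

section
/- Every essential closed two-sided ideal of a Z*-algebra is itself a Z*-algebra: if A is a C*-algebra in which every positive element is a zero divisor, and J is an essential closed two-sided ideal of A, then every positive element of J is a zero divisor within J. -/
/-!
If `a ∈ J` is positive, pick `x ≠ 0` with `a * x = 0`. Should `x * j ≠ 0` for some `j ∈ J`, then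
`x * j` is the required annihilator of `a` inside `J`. Otherwise `x` lies in the left annihilator
of `J`, a nonzero closed ideal; by essentiality it meets `J` in some `c ≠ 0`. But then
`c * (c⋆ * c) = 0`, so `(c⋆ * c)⋆ * (c⋆ * c) = 0`, and the C⋆-identity forces `c = 0`.
-/

namespace TwoSidedIdeal

variable {R : Type*} [NonUnitalRing R]

def leftAnnihilator (J : TwoSidedIdeal R) : TwoSidedIdeal R :=
  .mk' {c | ∀ j ∈ J, c * j = 0}
    (fun _ _ => zero_mul _)
    (fun hc hd j hj => by rw [add_mul, hc j hj, hd j hj, add_zero])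
    (fun hc j hj => by rw [neg_mul, hc j hj, neg_zero])
    (fun hd j hj => by rw [mul_assoc, hd j hj, mul_zero])
    (fun hc j hj => by rw [mul_assoc, hc _ (J.mul_mem_left _ _ hj)])

theorem mem_leftAnnihilator {J : TwoSidedIdeal R} {c : R} :
    c ∈ J.leftAnnihilator ↔ ∀ j ∈ J, c * j = 0 :=
  mem_mk' ..

theorem isClosed_leftAnnihilator [TopologicalSpace R] [IsTopologicalRing R] [T1Space R]
    (J : TwoSidedIdeal R) : IsClosed (J.leftAnnihilator : Set R) := by
  have hset : (J.leftAnnihilator : Set R) = ⋂ j ∈ (J : Set R), (· * j) ⁻¹' {0} := by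
    ext c
    simp only [SetLike.mem_coe, mem_leftAnnihilator, Set.mem_iInter, Set.mem_preimage,
      Set.mem_singleton_iff]
  rw [hset]
  exact isClosed_biInter fun j _ => isClosed_singleton.preimage (continuous_mul_const j)

end TwoSidedIdeal

theorem CStarRing.eq_zero_of_mul_star_mul_self_eq_zero {E : Type*} [NonUnitalNormedRing E]
    [StarRing E] [CStarRing E] {c : E} (h : c * (star c * c) = 0) : c = 0 := by
  have hsq : star (star c * c) * (star c * c) = 0 := by
    rw [star_mul, star_star, mul_assoc, h, mul_zero]
  rwa [star_mul_self_eq_zero_iff, star_mul_self_eq_zero_iff] at hsq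

theorem TwoSidedIdeal.eq_zero_of_mem_of_mem_leftAnnihilator {E : Type*} [NonUnitalNormedRing E]
    [StarRing E] [CStarRing E] {J : TwoSidedIdeal E} {c : E} (hcJ : c ∈ J)
    (hc : c ∈ J.leftAnnihilator) : c = 0 :=
  CStarRing.eq_zero_of_mul_star_mul_self_eq_zero <|
    mem_leftAnnihilator.1 hc _ (J.mul_mem_left _ _ hcJ)

theorem stmt_7_general {A : Type*} [NonUnitalCStarAlgebra A] [PartialOrder A] [StarOrderedRing A]
    (hA : ∀ a : A, 0 ≤ a → ∃ x : A, x ≠ 0 ∧ a * x = 0)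
    (J : TwoSidedIdeal A)
    (hJess : ∀ I : TwoSidedIdeal A, IsClosed (I : Set A) → I ≠ ⊥ →
      ∃ x, x ∈ J ∧ x ∈ I ∧ x ≠ 0) :
    ∀ a ∈ J, 0 ≤ a → ∃ x ∈ J, x ≠ 0 ∧ a * x = 0 := by
  intro a _ ha
  obtain ⟨x, hx0, hax⟩ := hA a ha
  by_cases hxJ : ∃ j ∈ J, x * j ≠ 0
  · obtain ⟨j, hjJ, hxj⟩ := hxJ
    exact ⟨x * j, J.mul_mem_left _ _ hjJ, hxj, by rw [← mul_assoc, hax, zero_mul]⟩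
  · push Not at hxJ
    have hann_ne_bot : J.leftAnnihilator ≠ ⊥ := fun h =>
      hx0 <| (TwoSidedIdeal.mem_bot _).1 (h ▸ TwoSidedIdeal.mem_leftAnnihilator.2 hxJ)
    obtain ⟨c, hcJ, hc, hc0⟩ := hJess _ J.isClosed_leftAnnihilator hann_ne_bot
    exact absurd (TwoSidedIdeal.eq_zero_of_mem_of_mem_leftAnnihilator hcJ hc) hc0

/-- Every essential closed two-sided ideal of a Z*-algebra is a Z*-algebra: each positive
element of `J` is annihilated by some nonzero element of `J`. -/
theorem stmt_7 {A : Type*} [NonUnitalCStarAlgebra A] [PartialOrder A] [StarOrderedRing A]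
    (hA : ∀ a : A, 0 ≤ a → ∃ x : A, x ≠ 0 ∧ a * x = 0)
    (J : TwoSidedIdeal A) (hJclosed : IsClosed (J : Set A))
    (hJess : ∀ I : TwoSidedIdeal A, IsClosed (I : Set A) → I ≠ ⊥ →
      ∃ x, x ∈ J ∧ x ∈ I ∧ x ≠ 0) :
    ∀ a ∈ J, 0 ≤ a → ∃ x ∈ J, x ≠ 0 ∧ a * x = 0 :=
  stmt_7_general hA J hJess
end

section
/- Let C be a C*-algebra with approximate identity (√h_α) where 0 ≤ h_α ≤ 1, and let y be a self-adjoint element of C. For every real λ with s(y) ≤ λ (where s(y) is the maximum of the spectrum of y) and every ε > 0, there exists an index α such that s(y − λ·h_α) ≤ ε. -/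
open Filter Topology

/-- The maximum of the spectrum of a self-adjoint element, computed in the unitization. -/
noncomputable def specMax {C : Type*} [NonUnitalCStarAlgebra C] (y : C) : ℝ :=
  sSup (spectrum ℝ (y : Unitization ℂ C))

/-! Put `s = √h_i`. Since `y ≤ λ` in the unitization, conjugating by `s` gives
`s y s ≤ λ s² = λ h_i`, so `y - λ h_i ≤ y - s y s ≤ ‖y - s y s‖`. The net `(s_i)` is
bounded and `s_i y → y`, hence also `y s_i → y` by taking adjoints, so `s_i y s_i → y`
and the right-hand side eventually drops below `ε`. -/

section Conjugation

variable {ι R : Type*} [NonUnitalNormedRing R] {l : Filter ι} {e : ι → R} {a : R}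

theorem tendsto_mul_mul_self_of_tendsto_mul
    (he : IsBoundedUnder (· ≤ ·) l (norm ∘ e))
    (hl : Tendsto (fun i => e i * a) l (𝓝 a)) (hr : Tendsto (fun i => a * e i) l (𝓝 a)) :
    Tendsto (fun i => e i * a * e i) l (𝓝 a) := by
  have hr₀ : Tendsto (fun i => a * e i - a) l (𝓝 0) := by
    simpa only [sub_self] using hr.sub_const a
  have hl₀ : Tendsto (fun i => e i * a - a) l (𝓝 0) := by
    simpa only [sub_self] using hl.sub_const a
  have hsum := (isBoundedUnder_le_mul_tendsto_zero he hr₀).add hl₀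
  rw [add_zero] at hsum
  have hsplit : ∀ i, e i * a * e i = e i * (a * e i - a) + (e i * a - a) + a := fun i => by
    noncomm_ring
  simpa only [hsplit, zero_add] using hsum.add_const a

end Conjugation

section SpecMax

variable {C : Type*} [NonUnitalCStarAlgebra C]

theorem specMax_le_iff {y : C} (hy : IsSelfAdjoint y) {r : ℝ} :
    specMax y ≤ r ↔ (y : Unitization ℂ C) ≤ algebraMap ℝ _ r := by
  have hY : IsSelfAdjoint (y : Unitization ℂ C) :=
    (Unitization.isSelfAdjoint_inr (R := ℂ)).mpr hy
  rw [le_algebraMap_iff_spectrum_le hY]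
  exact csSup_le_iff (spectrum.isCompact _).bddAbove
    (ContinuousFunctionalCalculus.spectrum_nonempty _ hY)

theorem inr_le_algebraMap_specMax {y : C} (hy : IsSelfAdjoint y) :
    (y : Unitization ℂ C) ≤ algebraMap ℝ _ (specMax y) :=
  (specMax_le_iff hy).mp le_rfl

theorem specMax_add_le {x y : C} (hx : IsSelfAdjoint x) (hy : IsSelfAdjoint y) :
    specMax (x + y) ≤ specMax x + specMax y := by
  rw [specMax_le_iff (hx.add hy), Unitization.inr_add, map_add]
  exact add_le_add (inr_le_algebraMap_specMax hx) (inr_le_algebraMap_specMax hy)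

theorem specMax_le_norm {y : C} (hy : IsSelfAdjoint y) : specMax y ≤ ‖y‖ := by
  rw [specMax_le_iff hy, ← Unitization.norm_inr (𝕜 := ℂ)]
  exact ((Unitization.isSelfAdjoint_inr (R := ℂ)).mpr hy).le_algebraMap_norm_self

theorem IsSelfAdjoint.mul_mul_self_sub_smul_mul_self {y s : C} (hy : IsSelfAdjoint y)
    (hs : IsSelfAdjoint s) (lam : ℝ) : IsSelfAdjoint (s * y * s - (lam : ℂ) • (s * s)) := by
  have hss : IsSelfAdjoint (s * s) := by simpa only [hs.star_eq] using IsSelfAdjoint.star_mul_self s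
  exact (hy.conjugate_self hs).sub (.smul (Complex.conj_ofReal lam) hss)

theorem specMax_mul_mul_sub_smul_nonpos {y s : C} (hy : IsSelfAdjoint y) (hs : IsSelfAdjoint s)
    {lam : ℝ} (hlam : specMax y ≤ lam) :
    specMax (s * y * s - (lam : ℂ) • (s * s)) ≤ 0 := by
  rw [specMax_le_iff (hy.mul_mul_self_sub_smul_mul_self hs lam), map_zero, Unitization.inr_sub,
    Unitization.inr_smul, Unitization.inr_mul, Unitization.inr_mul, Unitization.inr_mul, sub_nonpos]
  have := ((Unitization.isSelfAdjoint_inr (R := ℂ)).mpr hs).conjugate_le_conjugate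
    ((specMax_le_iff hy).mp hlam)
  rwa [Algebra.algebraMap_eq_smul_one, mul_smul_comm, mul_one, smul_mul_assoc,
    ← Complex.coe_smul] at this

theorem specMax_sub_smul_mul_self_le {y s : C} (hy : IsSelfAdjoint y) (hs : IsSelfAdjoint s)
    {lam : ℝ} (hlam : specMax y ≤ lam) :
    specMax (y - (lam : ℂ) • (s * s)) ≤ ‖y - s * y * s‖ := by
  have hsys : IsSelfAdjoint (s * y * s) := hy.conjugate_self hs
  calc specMax (y - (lam : ℂ) • (s * s))
      = specMax ((s * y * s - (lam : ℂ) • (s * s)) + (y - s * y * s)) := by congr 1; abel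
    _ ≤ specMax (s * y * s - (lam : ℂ) • (s * s)) + specMax (y - s * y * s) :=
        specMax_add_le (hy.mul_mul_self_sub_smul_mul_self hs lam) (hy.sub hsys)
    _ ≤ 0 + ‖y - s * y * s‖ :=
        add_le_add (specMax_mul_mul_sub_smul_nonpos hy hs hlam) (specMax_le_norm (hy.sub hsys))
    _ = ‖y - s * y * s‖ := zero_add _

theorem CFC.norm_sqrt_le_one [PartialOrder C] [StarOrderedRing C] {a : C} (ha : 0 ≤ a)
    (ha₁ : ‖a‖ ≤ 1) : ‖CFC.sqrt a‖ ≤ 1 := by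
  have hsq : ‖CFC.sqrt a‖ * ‖CFC.sqrt a‖ = ‖a‖ := by
    rw [← CStarRing.norm_star_mul_self, (IsSelfAdjoint.of_nonneg (CFC.sqrt_nonneg a)).star_eq,
      CFC.sqrt_mul_sqrt_self a ha]
  nlinarith [norm_nonneg (CFC.sqrt a)]

end SpecMax

theorem stmt_8_general {C : Type*} [NonUnitalCStarAlgebra C] [PartialOrder C] [StarOrderedRing C]
    {ι : Type*} (l : Filter ι) [l.NeBot] (h : ι → C)
    (hpos : ∀ i, 0 ≤ h i) (hle : ∀ i, ‖h i‖ ≤ 1)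
    (happrox_left : ∀ c : C, Tendsto (fun i => CFC.sqrt (h i) * c) l (𝓝 c))
    (y : C) (hy : IsSelfAdjoint y) (lam : ℝ) (hlam : specMax y ≤ lam)
    (ε : ℝ) (hε : 0 < ε) :
    ∃ i, specMax (y - (lam : ℂ) • h i) ≤ ε := by
  set s : ι → C := fun i => CFC.sqrt (h i)
  have hs : ∀ i, IsSelfAdjoint (s i) := fun i => .of_nonneg (CFC.sqrt_nonneg (h i))
  have hs_norm : ∀ i, ‖s i‖ ≤ 1 := fun i => CFC.norm_sqrt_le_one (hpos i) (hle i)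
  have hleft : Tendsto (fun i => s i * y) l (𝓝 y) := happrox_left y
  have hright : Tendsto (fun i => y * s i) l (𝓝 y) := by
    simpa only [star_mul, hy.star_eq, (hs _).star_eq] using hleft.star
  have hconj : Tendsto (fun i => s i * y * s i) l (𝓝 y) :=
    tendsto_mul_mul_self_of_tendsto_mul (isBoundedUnder_of ⟨1, hs_norm⟩) hleft hright
  obtain ⟨i, hi⟩ := (hconj.eventually (Metric.ball_mem_nhds y hε)).exists
  refine ⟨i, ?_⟩
  calc specMax (y - (lam : ℂ) • h i)
      = specMax (y - (lam : ℂ) • (s i * s i)) := by rw [CFC.sqrt_mul_sqrt_self (h i) (hpos i)]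
    _ ≤ ‖y - s i * y * s i‖ := specMax_sub_smul_mul_self_le hy (hs i) hlam
    _ ≤ ε := by rw [norm_sub_rev, ← dist_eq_norm]; exact hi.le

/-- If `(√h_i)` is an approximate identity with `0 ≤ h_i ≤ 1`, `y` is self-adjoint and
`s(y) ≤ λ`, then for every `ε > 0` some index `i` satisfies `s(y - λ·h_i) ≤ ε`. -/
theorem stmt_8 {C : Type*} [NonUnitalCStarAlgebra C] [PartialOrder C] [StarOrderedRing C]
    {ι : Type*} (l : Filter ι) [l.NeBot] (h : ι → C)
    (hpos : ∀ i, 0 ≤ h i) (hle : ∀ i, ‖h i‖ ≤ 1)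
    (happrox_left : ∀ c : C, Tendsto (fun i => CFC.sqrt (h i) * c) l (𝓝 c))
    (happrox_right : ∀ c : C, Tendsto (fun i => c * CFC.sqrt (h i)) l (𝓝 c))
    (y : C) (hy : IsSelfAdjoint y) (lam : ℝ) (hlam : specMax y ≤ lam)
    (ε : ℝ) (hε : 0 < ε) :
    ∃ i, specMax (y - (lam : ℂ) • h i) ≤ ε :=
  stmt_8_general l h hpos hle happrox_left y hy lam hlam ε hε
end

section
/- Let A be a Z*-algebra and K a compact subset of A (in the norm topology). Then there exists a nonzero positive element x ∈ A such that x·k = k·x = 0 for all k ∈ K. -/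
/-!
A compact set `K` is separable; enumerate a countable set `{u n}` whose closure contains it. The
positive element `a = ∑ cₙ (u n⋆ u n + u n u n⋆)`, with weights `cₙ > 0` small enough for the
series to converge, has a right zero divisor `x ≠ 0`. Then `x⋆ a x = 0` is a convergent sum of
positive terms `cₙ ((u n x)⋆ (u n x) + (u n⋆ x)⋆ (u n⋆ x))`, so all of them vanish, and the
C⋆-identity gives `u n x = 0 = x⋆ u n`. By continuity `k x = 0 = x⋆ k` for every `k ∈ K`, and
`x x⋆` is the required element.
-/

section CStarAlgebra

variable {A : Type*} [NonUnitalCStarAlgebra A]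

lemma summable_smul_star_mul_self_add_mul_star (u : ℕ → A) :
    Summable fun n ↦
      ((1 / 2 : ℝ) ^ n / (1 + ‖u n‖ ^ 2)) • (star (u n) * u n + u n * star (u n)) := by
  refine .of_norm_bounded (summable_geometric_two.mul_left 2) fun n ↦ ?_
  have hnorm : ‖star (u n) * u n + u n * star (u n)‖ ≤ 2 * ‖u n‖ ^ 2 := by
    calc _ ≤ ‖star (u n) * u n‖ + ‖u n * star (u n)‖ := norm_add_le _ _
      _ = 2 * ‖u n‖ ^ 2 := by
        rw [CStarRing.norm_star_mul_self, CStarRing.norm_self_mul_star]; ring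
  have hpos : 0 < 1 + ‖u n‖ ^ 2 := by positivity
  rw [norm_smul, Real.norm_of_nonneg (by positivity), div_mul_eq_mul_div, div_le_iff₀ hpos]
  calc (1 / 2 : ℝ) ^ n * ‖star (u n) * u n + u n * star (u n)‖
      ≤ (1 / 2) ^ n * (2 * ‖u n‖ ^ 2) := by gcongr
    _ ≤ 2 * (1 / 2) ^ n * (1 + ‖u n‖ ^ 2) := by
      nlinarith [pow_pos (by norm_num : (0 : ℝ) < 1 / 2) n]

variable [PartialOrder A] [StarOrderedRing A]

lemma star_mul_self_add_mul_star_nonneg (v : A) : 0 ≤ star v * v + v * star v :=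
  add_nonneg (star_mul_self_nonneg v) (mul_star_self_nonneg v)

lemma star_left_conjugate_star_mul_self_add_mul_star_eq_zero_iff (v x : A) :
    star x * (star v * v + v * star v) * x = 0 ↔ v * x = 0 ∧ star x * v = 0 := by
  have hsplit : star x * (star v * v + v * star v) * x
      = star (v * x) * (v * x) + star (star v * x) * (star v * x) := by
    simp only [star_mul, star_star]
    noncomm_ring
  rw [hsplit, add_eq_zero_iff_of_nonneg (star_mul_self_nonneg _) (star_mul_self_nonneg _),
    CStarRing.star_mul_self_eq_zero_iff, CStarRing.star_mul_self_eq_zero_iff,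
    ← star_eq_zero (x := star v * x), star_mul, star_star]

lemma exists_nonneg_forall_mul_eq_zero_imp (u : ℕ → A) :
    ∃ a : A, 0 ≤ a ∧ ∀ x : A, a * x = 0 → ∀ n, u n * x = 0 ∧ star x * u n = 0 := by
  set c : ℕ → ℝ := fun n ↦ (1 / 2 : ℝ) ^ n / (1 + ‖u n‖ ^ 2)
  have hc : ∀ n, 0 < c n := fun n ↦ by positivity
  set f : ℕ → A := fun n ↦ c n • (star (u n) * u n + u n * star (u n))
  have hf : ∀ n, 0 ≤ f n := fun n ↦
    smul_nonneg (hc n).le (star_mul_self_add_mul_star_nonneg (u n))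
  refine ⟨∑' n, f n, tsum_nonneg hf, fun x hx n ↦ ?_⟩
  have hsum : HasSum (fun n ↦ star x * f n * x) (star x * (∑' n, f n) * x) :=
    ((summable_smul_star_mul_self_add_mul_star u).hasSum.mul_left _).mul_right _
  rw [mul_assoc, hx, mul_zero] at hsum
  have hterm := congrFun ((hasSum_zero_iff_of_nonneg fun n ↦
    star_left_conjugate_nonneg (hf n) x).mp hsum) n
  rw [Pi.zero_apply, mul_smul_comm, smul_mul_assoc, smul_eq_zero] at hterm
  exact (star_left_conjugate_star_mul_self_add_mul_star_eq_zero_iff _ _).mp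
    (hterm.resolve_left (hc n).ne')

end CStarAlgebra

/-- If `A` is a Z*-algebra and `K ⊆ A` is compact, then some nonzero positive `x`
annihilates `K` on both sides. -/
theorem stmt_12 {A : Type*} [NonUnitalCStarAlgebra A] [PartialOrder A] [StarOrderedRing A]
    (hA : ∀ a : A, 0 ≤ a → ∃ x : A, x ≠ 0 ∧ a * x = 0)
    (K : Set A) (hK : IsCompact K) :
    ∃ x : A, 0 ≤ x ∧ x ≠ 0 ∧ ∀ k ∈ K, x * k = 0 ∧ k * x = 0 := by
  obtain ⟨S, hS, hKS⟩ := hK.isSeparable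
  -- `insert 0` only makes the set nonempty, so that it can be enumerated.
  obtain ⟨u, hu⟩ := (hS.insert 0).exists_eq_range (Set.insert_nonempty 0 S)
  obtain ⟨a, ha, hau⟩ := exists_nonneg_forall_mul_eq_zero_imp u
  obtain ⟨x, hx, hax⟩ := hA a ha
  have hclosed : IsClosed {k : A | k * x = 0 ∧ star x * k = 0} :=
    (isClosed_eq (by fun_prop) continuous_const).inter (isClosed_eq (by fun_prop) continuous_const)
  have hKu : K ⊆ closure (Set.range u) := hKS.trans (closure_mono (hu ▸ Set.subset_insert 0 S))
  have hK_ann : ∀ k ∈ K, k * x = 0 ∧ star x * k = 0 := fun k hk ↦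
    hclosed.closure_subset_iff.mpr (Set.range_subset_iff.mpr (hau x hax)) (hKu hk)
  refine ⟨x * star x, mul_star_self_nonneg x, (CStarRing.mul_star_self_ne_zero_iff x).mpr hx,
    fun k hk ↦ ⟨?_, ?_⟩⟩
  · rw [mul_assoc, (hK_ann k hk).2, mul_zero]
  · rw [← mul_assoc, (hK_ann k hk).1, zero_mul]
end

section
/- Let (aₙ) be a sequence of positive elements of a C*-algebra A that converges to 0 in norm. Then there exist a sequence (bₙ) of nonnegative real numbers converging to 0 and a sequence (cₖ) of positive elements of A converging to 0 such that a_{n+k} ≤ bₙ · cₖ for all n, k. -/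
open Filter Topology
open scoped NNReal

/-!
Write `a m = s m • e m`, where `s` is an antitone positive null majorant of `‖a m‖`, so that
`‖e m‖ ≤ 1` and `s (n + k) ≤ √(s n) * √(s k)`. It then suffices to find bounded positive `y k`
with `e (n + k) ≤ (2 * 2 ^ J n) • y k` for some `J → ∞` so slow that `2 ^ J n * √(s n) → 0`.

The geometric sum `z k = ∑ 2⁻ⁿ • e (n + k)` gives `e (n + k) ≤ 2 ^ n • z k`, with exponentially
bad constants. The operator monotone map `φ = cfcₙ (u ↦ 1 - (1 + u)⁻¹)` takes values in the unit
ball and satisfies `e ≤ 2 • φ e` for positive contractions, so `e (n + k) ≤ 2 • φ (2 ^ N • z k)`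
for every `N ≥ n`. Summing `φ (2 ^ N j • z k)` with weights `2⁻ʲ` over exponents `N j` so sparse
that `n < N (J n)` costs only the factor `2 ^ J n`.
-/

theorem exists_antitone_majorant_of_tendsto_zero {u : ℕ → ℝ} (hu : Tendsto u atTop (𝓝 0)) :
    ∃ s : ℕ → ℝ, (∀ n, 0 < s n) ∧ Antitone s ∧ (∀ n, u n ≤ s n) ∧
      Tendsto s atTop (𝓝 0) := by
  obtain ⟨C, hC⟩ := hu.abs.bddAbove_range
  have hbdd (n : ℕ) : BddAbove (Set.range fun m => |u (n + m)|) :=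
    ⟨C, Set.forall_mem_range.2 fun m => hC ⟨n + m, rfl⟩⟩
  set t : ℕ → ℝ := fun n => ⨆ m, |u (n + m)|
  have le_t {n m : ℕ} (h : n ≤ m) : |u m| ≤ t n := by
    simpa [Nat.add_sub_cancel' h] using le_ciSup (hbdd n) (m - n)
  have ht_nonneg (n : ℕ) : 0 ≤ t n := (abs_nonneg _).trans (le_t le_rfl)
  have ht_anti : Antitone t := fun n n' h =>
    ciSup_le fun m => le_t (h.trans (Nat.le_add_right _ _))
  have ht : Tendsto t atTop (𝓝 0) := by
    refine Metric.tendsto_atTop.2 fun ε hε => ?_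
    obtain ⟨N, hN⟩ := Metric.tendsto_atTop.1 hu (ε / 2) (half_pos hε)
    refine ⟨N, fun n hn => ?_⟩
    have : t n ≤ ε / 2 := ciSup_le fun m => by
      simpa using (hN (n + m) (hn.trans (Nat.le_add_right _ _))).le
    rw [Real.dist_eq, sub_zero, abs_of_nonneg (ht_nonneg n)]
    linarith
  have hgeom := tendsto_pow_atTop_nhds_zero_of_lt_one (by norm_num : (0:ℝ) ≤ 2⁻¹) (by norm_num)
  refine ⟨fun n => t n + 2⁻¹ ^ n, fun n => add_pos_of_nonneg_of_pos (ht_nonneg n) (by positivity),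
    ?_, fun n => ?_, ?_⟩
  · exact ht_anti.add fun n n' h => pow_le_pow_of_le_one (by norm_num) (by norm_num) h
  · exact (le_abs_self _).trans ((le_t le_rfl).trans (le_add_of_nonneg_right (by positivity)))
  · simpa using ht.add hgeom

theorem exists_tendsto_atTop_two_pow_mul_tendsto_zero {σ : ℕ → ℝ} (hσ0 : ∀ n, 0 < σ n)
    (hσ : Tendsto σ atTop (𝓝 0)) :
    ∃ J : ℕ → ℕ, Tendsto J atTop atTop ∧ Tendsto (fun n => (2:ℝ) ^ J n * σ n) atTop (𝓝 0) := by
  have hsqrt : Tendsto (fun n => √(σ n)) atTop (𝓝 0) := by simpa using hσ.sqrt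
  set t : ℕ → ℝ := fun n => (√(σ n))⁻¹
  have ht : Tendsto t atTop atTop :=
    tendsto_inv_nhdsGT_zero.comp (tendsto_nhdsWithin_iff.2
      ⟨hsqrt, Eventually.of_forall fun n => Real.sqrt_pos.2 (hσ0 n)⟩)
  have hlog : Tendsto (Nat.log 2) atTop atTop :=
    Nat.log_monotone.tendsto_atTop_atTop fun j => ⟨2 ^ j, (Nat.log_pow one_lt_two j).ge⟩
  refine ⟨fun n => Nat.log 2 ⌊t n⌋₊, hlog.comp (tendsto_nat_floor_atTop.comp ht), ?_⟩
  refine squeeze_zero (fun n => mul_nonneg (by positivity) (hσ0 n).le) (fun n => ?_)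
    (by simpa using hsqrt.add hσ)
  have hpow : (2:ℝ) ^ Nat.log 2 ⌊t n⌋₊ ≤ t n + 1 := by
    have : (2:ℝ) ^ Nat.log 2 ⌊t n⌋₊ ≤ ⌊t n⌋₊ + 1 := by
      exact_mod_cast Nat.pow_log_le_add_one 2 ⌊t n⌋₊
    linarith [Nat.floor_le (by positivity : 0 ≤ t n)]
  calc (2:ℝ) ^ Nat.log 2 ⌊t n⌋₊ * σ n ≤ (t n + 1) * σ n := by gcongr; exact (hσ0 n).le
    _ = √(σ n) + σ n := by
      have := Real.sqrt_pos.2 (hσ0 n)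
      simp only [t]
      field_simp
      linear_combination -Real.mul_self_sqrt (hσ0 n).le

theorem NNReal.le_two_mul_one_sub_one_add_inv {u : ℝ≥0} (hu : u ≤ 1) :
    u ≤ 2 * (1 - (1 + u)⁻¹) := by
  have h : (1 + u)⁻¹ ≤ 1 := inv_le_one_of_one_le₀ le_self_add
  rw [← NNReal.coe_le_coe]
  push_cast [NNReal.coe_sub h]
  have hu' : (u : ℝ) ≤ 1 := hu
  have : (0:ℝ) ≤ u := u.2
  field_simp
  nlinarith

theorem Antitone.le_sqrt_mul_sqrt_add {s : ℕ → ℝ} (hs : Antitone s) (hs0 : ∀ n, 0 ≤ s n)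
    (n k : ℕ) : s (n + k) ≤ √(s n) * √(s k) := by
  rw [← Real.sqrt_mul_self (hs0 (n + k)), ← Real.sqrt_mul (hs0 n)]
  exact Real.sqrt_le_sqrt (mul_le_mul (hs (Nat.le_add_right n k)) (hs (Nat.le_add_left k n))
    (hs0 _) (hs0 _))

section CStarAlgebra

variable {A : Type*} [NonUnitalCStarAlgebra A] [PartialOrder A] [StarOrderedRing A]

theorem exists_bounded_majorant_two_pow_smul {x : ℕ → A} (hx0 : ∀ j, 0 ≤ x j)
    (hx1 : ∀ j, ‖x j‖ ≤ 1) : ∃ y : A, 0 ≤ y ∧ ‖y‖ ≤ 2 ∧ ∀ j, x j ≤ (2:ℝ) ^ j • y := by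
  have hgeom : HasSum (fun j : ℕ => (2⁻¹:ℝ) ^ j) 2 := by
    convert hasSum_geometric_of_lt_one (r := (2⁻¹:ℝ)) (by norm_num) (by norm_num)
    norm_num
  have hbound (j : ℕ) : ‖(2⁻¹:ℝ) ^ j • x j‖ ≤ (2⁻¹:ℝ) ^ j := by
    rw [norm_smul, norm_pow, norm_inv, Real.norm_two]
    exact mul_le_of_le_one_right (by positivity) (hx1 j)
  have hsum : Summable fun j => (2⁻¹:ℝ) ^ j • x j :=
    .of_norm_bounded hgeom.summable hbound
  have hterm (j : ℕ) : 0 ≤ (2⁻¹:ℝ) ^ j • x j := smul_nonneg (by positivity) (hx0 j)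
  refine ⟨∑' j, (2⁻¹:ℝ) ^ j • x j, tsum_nonneg hterm, tsum_of_norm_bounded hgeom hbound,
    fun j => ?_⟩
  calc x j = (2:ℝ) ^ j • (2⁻¹:ℝ) ^ j • x j := by
        rw [smul_smul, ← mul_pow, mul_inv_cancel₀ two_ne_zero, one_pow, one_smul]
    _ ≤ (2:ℝ) ^ j • ∑' j, (2⁻¹:ℝ) ^ j • x j :=
        smul_le_smul_of_nonneg_left (hsum.le_tsum j fun i _ => hterm i) (by positivity)

theorem le_two_smul_cfcₙ_one_sub_one_add_inv {x : A} (hx0 : 0 ≤ x) (hx1 : ‖x‖ ≤ 1) :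
    x ≤ (2:ℝ) • cfcₙ (fun u : ℝ≥0 => 1 - (1 + u)⁻¹) x := by
  have hx1' : ‖x‖₊ ≤ 1 := hx1
  rw [← NNReal.coe_two, ← NNReal.smul_def, ← cfcₙ_smul (2:ℝ≥0) _ x
    (by fun_prop (disch := intro _ _; positivity))]
  conv_lhs => rw [← cfcₙ_id ℝ≥0 x hx0]
  refine cfcₙ_mono (fun u hu => ?_) (hg := by fun_prop (disch := intro _ _; positivity))
  exact NNReal.le_two_mul_one_sub_one_add_inv
    ((CStarAlgebra.le_nnnorm_of_mem_quasispectrum hu).trans hx1')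

theorem exists_shift_majorant {e : ℕ → A} (he0 : ∀ m, 0 ≤ e m) (he1 : ∀ m, ‖e m‖ ≤ 1)
    {J : ℕ → ℕ} (hJ : Tendsto J atTop atTop) :
    ∃ y : ℕ → A, (∀ k, 0 ≤ y k) ∧ (∀ k, ‖y k‖ ≤ 2) ∧
      ∀ n k, e (n + k) ≤ (2 * 2 ^ J n : ℝ) • y k := by
  set φ : A → A := cfcₙ (fun u : ℝ≥0 => 1 - (1 + u)⁻¹)
  choose z hz0 _ hz using fun k =>
    exists_bounded_majorant_two_pow_smul (fun n => he0 (n + k)) (fun n => he1 (n + k))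
  choose N hN using fun j => eventually_atTop.1 (hJ.eventually_gt_atTop j)
  have lt_N (n : ℕ) : n < N (J n) := by
    by_contra! h
    exact (hN (J n) n h).false
  choose y hy0 hy1 hy using fun k =>
    exists_bounded_majorant_two_pow_smul (x := fun j => φ ((2:ℝ) ^ N j • z k))
      (fun _ => cfcₙ_nonneg fun _ _ => zero_le)
      (fun _ => (norm_cfcₙ_one_sub_one_add_inv_lt_one _).le)
  refine ⟨y, hy0, hy1, fun n k => ?_⟩
  have hscale : (2:ℝ) ^ n • z k ≤ (2:ℝ) ^ N (J n) • z k :=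
    smul_le_smul_of_nonneg_right (pow_le_pow_right₀ one_le_two (lt_N n).le) (hz0 k)
  calc e (n + k) ≤ (2:ℝ) • φ (e (n + k)) := le_two_smul_cfcₙ_one_sub_one_add_inv (he0 _) (he1 _)
    _ ≤ (2:ℝ) • φ ((2:ℝ) ^ N (J n) • z k) := by
        refine smul_le_smul_of_nonneg_left ?_ zero_le_two
        exact CFC.monotoneOn_one_sub_one_add_inv (he0 _) (smul_nonneg (by positivity) (hz0 k))
          ((hz k n).trans hscale)
    _ ≤ (2:ℝ) • (2:ℝ) ^ J n • y k := smul_le_smul_of_nonneg_left (hy k (J n)) zero_le_two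
    _ = (2 * 2 ^ J n : ℝ) • y k := smul_smul _ _ _

end CStarAlgebra

/-- If `(aₙ)` is a sequence of positive elements of a C*-algebra converging to `0`, then
there are a null sequence `(bₙ)` of nonnegative reals and a null sequence `(cₖ)` of
positive elements with `a_{n+k} ≤ bₙ • cₖ` for all `n, k`. -/
theorem stmt_13 {A : Type*} [NonUnitalCStarAlgebra A] [PartialOrder A] [StarOrderedRing A]
    (a : ℕ → A) (ha : ∀ n, 0 ≤ a n) (hlim : Tendsto a atTop (𝓝 0)) :
    ∃ (b : ℕ → ℝ) (c : ℕ → A), (∀ n, 0 ≤ b n) ∧ (∀ k, 0 ≤ c k) ∧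
      Tendsto b atTop (𝓝 0) ∧ Tendsto c atTop (𝓝 0) ∧
      ∀ n k, a (n + k) ≤ (b n : ℂ) • c k := by
  obtain ⟨s, hs0, hs_anti, has, hs⟩ :=
    exists_antitone_majorant_of_tendsto_zero (tendsto_zero_iff_norm_tendsto_zero.1 hlim)
  have hσ : Tendsto (fun n => √(s n)) atTop (𝓝 0) := by simpa using hs.sqrt
  obtain ⟨J, hJ, hJσ⟩ :=
    exists_tendsto_atTop_two_pow_mul_tendsto_zero (fun n => Real.sqrt_pos.2 (hs0 n)) hσ
  obtain ⟨y, hy0, hy1, hy⟩ := exists_shift_majorant (e := fun m => (s m)⁻¹ • a m)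
    (fun m => smul_nonneg (inv_nonneg.2 (hs0 m).le) (ha m))
    (fun m => by
      rw [norm_smul, norm_inv, Real.norm_of_nonneg (hs0 m).le]
      exact inv_mul_le_one_of_le₀ (has m) (hs0 m).le) hJ
  refine ⟨fun n => 2 * (2 ^ J n * √(s n)), fun k => √(s k) • y k, fun n => by positivity,
    fun k => smul_nonneg (Real.sqrt_nonneg _) (hy0 k), by simpa using hJσ.const_mul 2, ?_,
    fun n k => ?_⟩
  · refine squeeze_zero_norm (fun k => ?_) (by simpa using hσ.mul_const 2)
    rw [norm_smul, Real.norm_of_nonneg (Real.sqrt_nonneg _)]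
    exact mul_le_mul_of_nonneg_left (hy1 k) (Real.sqrt_nonneg _)
  rw [Complex.coe_smul, smul_smul]
  calc a (n + k) = s (n + k) • (s (n + k))⁻¹ • a (n + k) := (smul_inv_smul₀ (hs0 _).ne' _).symm
    _ ≤ s (n + k) • (2 * 2 ^ J n : ℝ) • y k :=
        smul_le_smul_of_nonneg_left (hy n k) (hs0 _).le
    _ ≤ (√(s n) * √(s k)) • (2 * 2 ^ J n : ℝ) • y k :=
        smul_le_smul_of_nonneg_right (hs_anti.le_sqrt_mul_sqrt_add (fun m => (hs0 m).le) n k)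
          (smul_nonneg (by positivity) (hy0 k))
    _ = (2 * (2 ^ J n * √(s n)) * √(s k)) • y k := by rw [smul_smul]; ring_nf
end

section
/- Let J be a closed two-sided ideal of a C*-algebra A with quotient map π : A → A/J. If A is a Z*-algebra but A/J is not a Z*-algebra, then J is a Z*-algebra. Equivalently, an extension of a non-Z*-algebra by a non-Z*-algebra is a non-Z*-algebra. -/
/-!
Choose a positive `b ∈ A/J` whose only right annihilator is `0` and lift it to a positive
`c ∈ A`. For positive `a ∈ J`, the Z*-property of `A` gives `x ≠ 0` with `(a + c) x = 0`.
Since `a` and `c` are positive, `x* a x + x* c x = 0` forces `a x = 0` and `c x = 0`; the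
latter gives `b π(x) = 0`, hence `π(x) = 0`, i.e. `x ∈ J`.
-/

lemma exists_nonneg_map_eq_of_surjective {F A B : Type*} [NonUnitalRing A] [StarRing A]
    [PartialOrder A] [StarOrderedRing A] [NonUnitalCStarAlgebra B] [PartialOrder B]
    [StarOrderedRing B] [FunLike F A B] [MulHomClass F A B] [StarHomClass F A B] {π : F}
    (hπ : Function.Surjective π) {b : B} (hb : 0 ≤ b) : ∃ c, 0 ≤ c ∧ π c = b := by
  obtain ⟨d, rfl⟩ := CStarAlgebra.nonneg_iff_eq_star_mul_self.mp hb
  obtain ⟨c, rfl⟩ := hπ d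
  exact ⟨star c * c, star_mul_self_nonneg c, by rw [map_mul, map_star]⟩

section NonUnitalCStarAlgebra

variable {A : Type*} [NonUnitalCStarAlgebra A] [PartialOrder A] [StarOrderedRing A] {a b x : A}

lemma mul_eq_zero_of_star_mul_mul_eq_zero (ha : 0 ≤ a) (h : star x * a * x = 0) :
    a * x = 0 := by
  obtain ⟨s, rfl⟩ := CStarAlgebra.nonneg_iff_eq_star_mul_self.mp ha
  have hsx : s * x = 0 :=
    (CStarRing.star_mul_self_eq_zero_iff _).mp (by simpa only [star_mul, mul_assoc] using h)
  rw [mul_assoc, hsx, mul_zero]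

lemma add_mul_eq_zero_iff_of_nonneg (ha : 0 ≤ a) (hb : 0 ≤ b) :
    (a + b) * x = 0 ↔ a * x = 0 ∧ b * x = 0 := by
  refine ⟨fun h => ?_, fun ⟨hax, hbx⟩ => by rw [add_mul, hax, hbx, add_zero]⟩
  have hconj : star x * a * x + star x * b * x = 0 := by
    rw [mul_assoc, mul_assoc, ← mul_add, ← add_mul, h, mul_zero]
  obtain ⟨hxax, hxbx⟩ := (add_eq_zero_iff_of_nonneg (star_left_conjugate_nonneg ha x)
    (star_left_conjugate_nonneg hb x)).mp hconj
  exact ⟨mul_eq_zero_of_star_mul_mul_eq_zero ha hxax, mul_eq_zero_of_star_mul_mul_eq_zero hb hxbx⟩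

end NonUnitalCStarAlgebra

/-- An extension of a non-Z*-algebra by a non-Z*-algebra is a non-Z*-algebra.
Equivalently: if `π : A → B` is a surjective *-homomorphism of C*-algebras (so that `B`
is the quotient of `A` by the closed two-sided ideal `J = ker π`), `A` is a Z*-algebra,
and `B = A/J` is not a Z*-algebra, then `J` is a Z*-algebra: every positive `a ∈ J`
admits a nonzero `x ∈ J` with `a * x = 0`. -/
theorem stmt_18 {A B : Type*} [NonUnitalCStarAlgebra A] [PartialOrder A] [StarOrderedRing A]
    [NonUnitalCStarAlgebra B] [PartialOrder B] [StarOrderedRing B]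
    (π : A →⋆ₙₐ[ℂ] B) (hsurj : Function.Surjective π)
    (hA : ∀ a : A, 0 ≤ a → ∃ x : A, x ≠ 0 ∧ a * x = 0)
    (hB : ¬ ∀ b : B, 0 ≤ b → ∃ y : B, y ≠ 0 ∧ b * y = 0) :
    ∀ a : A, π a = 0 → 0 ≤ a → ∃ x : A, π x = 0 ∧ x ≠ 0 ∧ a * x = 0 := by
  push Not at hB
  obtain ⟨b, hb, hb_no_annihilator⟩ := hB
  obtain ⟨c, hc, rfl⟩ := exists_nonneg_map_eq_of_surjective hsurj hb
  intro a _ ha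
  obtain ⟨x, hx, hacx⟩ := hA (a + c) (add_nonneg ha hc)
  obtain ⟨hax, hcx⟩ := (add_mul_eq_zero_iff_of_nonneg ha hc).mp hacx
  refine ⟨x, ?_, hx, hax⟩
  by_contra hπx
  exact hb_no_annihilator (π x) hπx (by rw [← map_mul, hcx, map_zero])
end

section
/- In M₄(ℂ) ≅ M₂(ℂ) ⊗ M₂(ℂ), let x be the positive matrix with entries x₁₁ = x₁₄ = x₄₁ = x₄₄ = 1 and all other entries 0. Then there exist no nonzero matrices a, b ∈ M₂(ℂ) such that 0 < a ⊗ b ≤ x (i.e., a ⊗ b is a nonzero positive matrix dominated by x). -/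
open Matrix
open scoped Kronecker ComplexOrder

/-- The matrix `x = E₁₁ + E₁₄ + E₄₁ + E₄₄` in `M₄(ℂ) ≅ M₂(ℂ) ⊗ M₂(ℂ)`, written with
index set `Fin 2 × Fin 2` where `(0,0)` corresponds to `1` and `(1,1)` to `4`. -/
def xMat : Matrix (Fin 2 × Fin 2) (Fin 2 × Fin 2) ℂ :=
  fun i j => if (i = (0, 0) ∨ i = (1, 1)) ∧ (j = (0, 0) ∨ j = (1, 1)) then 1 else 0

/-!
Proof idea: if `0 ≤ M ≤ x` then `ker x ⊆ ker M`, since `v⋆ M v ≤ v⋆ x v = 0` for `v ∈ ker x`.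
The kernel of `x` is spanned by `e₂`, `e₃` and `e₁ - e₄`. Writing `aₖ, bₗ` for the columns of
`a, b`, the column of `a ⊗ b` at `(k, l)` is `aₖ ⊗ bₗ`, so `a ⊗ b` kills this kernel only if
`a₀ ⊗ b₁ = a₁ ⊗ b₀ = 0` and `a₀ ⊗ b₀ = a₁ ⊗ b₁`, which forces `a = 0` or `b = 0`.
-/

namespace Matrix

theorem PosSemidef.mulVec_eq_zero_of_posSemidef_sub {𝕜 n : Type*} [RCLike 𝕜] [Fintype n]
    {M N : Matrix n n 𝕜} (hM : M.PosSemidef) (hNM : (N - M).PosSemidef) {v : n → 𝕜}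
    (hv : N *ᵥ v = 0) : M *ᵥ v = 0 := by
  have hle := hNM.dotProduct_mulVec_nonneg v
  rw [sub_mulVec, dotProduct_sub, hv, dotProduct_zero, zero_sub, neg_nonneg] at hle
  exact (hM.dotProduct_mulVec_zero_iff v).mp (le_antisymm hle (hM.dotProduct_mulVec_nonneg v))

theorem eq_zero_or_eq_zero_of_kronecker_mulVec {R : Type*} [Ring R] [NoZeroDivisors R]
    {a b : Matrix (Fin 2) (Fin 2) R}
    (h01 : (a ⊗ₖ b) *ᵥ Pi.single (0, 1) 1 = 0) (h10 : (a ⊗ₖ b) *ᵥ Pi.single (1, 0) 1 = 0)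
    (hdiag : (a ⊗ₖ b) *ᵥ (Pi.single (0, 0) 1 - Pi.single (1, 1) 1) = 0) :
    a = 0 ∨ b = 0 := by
  have h01 (i j : Fin 2) : a i 0 * b j 1 = 0 := by
    simpa [mulVec_single] using congrFun h01 (i, j)
  have h10 (i j : Fin 2) : a i 1 * b j 0 = 0 := by
    simpa [mulVec_single] using congrFun h10 (i, j)
  have hdiag (i j : Fin 2) : a i 0 * b j 0 = a i 1 * b j 1 := by
    simpa [mulVec_sub, mulVec_single, sub_eq_zero] using congrFun hdiag (i, j)
  have hb_of_ne (i k : Fin 2) (hik : a i k ≠ 0) (j : Fin 2) : b j 0 = 0 ∧ b j 1 = 0 := by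
    fin_cases k
    · have hb1 : b j 1 = 0 := (mul_eq_zero.mp (h01 i j)).resolve_left hik
      have hd := hdiag i j
      rw [hb1, mul_zero] at hd
      exact ⟨(mul_eq_zero.mp hd).resolve_left hik, hb1⟩
    · have hb0 : b j 0 = 0 := (mul_eq_zero.mp (h10 i j)).resolve_left hik
      have hd := hdiag i j
      rw [hb0, mul_zero, eq_comm] at hd
      exact ⟨hb0, (mul_eq_zero.mp hd).resolve_left hik⟩
  by_cases ha : a = 0
  · exact .inl ha
  obtain ⟨i, k, hik⟩ : ∃ i k, a i k ≠ 0 := by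
    by_contra! h
    exact ha (ext h)
  refine .inr (ext fun j l => ?_)
  fin_cases l
  exacts [(hb_of_ne i k hik j).1, (hb_of_ne i k hik j).2]

end Matrix

/-- There are no nonzero `a, b ∈ M₂(ℂ)` with `0 < a ⊗ b ≤ x` in the Loewner order,
i.e. with `a ⊗ₖ b` positive semidefinite, nonzero, and `x - a ⊗ₖ b` positive
semidefinite. -/
theorem stmt_19 :
    ¬ ∃ a b : Matrix (Fin 2) (Fin 2) ℂ,
      (a ⊗ₖ b) ≠ 0 ∧ (a ⊗ₖ b).PosSemidef ∧ (xMat - a ⊗ₖ b).PosSemidef := by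
  rintro ⟨a, b, hne, hM, hxM⟩
  have hker {v} (hv : xMat *ᵥ v = 0) : (a ⊗ₖ b) *ᵥ v = 0 :=
    hM.mulVec_eq_zero_of_posSemidef_sub hxM hv
  have hab := eq_zero_or_eq_zero_of_kronecker_mulVec (hker ?_) (hker ?_) (hker ?_)
  · rcases hab with rfl | rfl <;> simp at hne
  all_goals
    funext u
    simp [xMat, mulVec, dotProduct, Fintype.sum_prod_type, Prod.ext_iff, Pi.single_apply,
      ite_add_ite]
end
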